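/- arXiv:1705.02697 — 2 statements merged into one kernel-verified Lean document; each statement's English description precedes it below -/
import Mathlib

section
/- For any completely semiprime submodule N of a module M, the envelope E_M(N) is a submodule of M. -/
/-- A submodule `P` is completely prime if it is proper and `a • m ∈ P` implies
`m ∈ P` or `a • M ⊆ P`. -/
def IsCompletelyPrimeSubmodule {R : Type*} [Ring R] {M : Type*} [AddCommGroup M] [Module R M]
    (P : Submodule R M) : Prop :=
  P ≠ ⊤ ∧ ∀ (a : R) (m : M), a • m ∈ P → m ∈ P ∨ ∀ x : M, a • x ∈ P

/-- A submodule `P` is prime if it is proper and for every two-sided ideal `A` of `R`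
and submodule `N`, `A N ⊆ P` implies `N ⊆ P` or `A M ⊆ P`. -/
def IsPrimeSubmodule {R : Type*} [Ring R] {M : Type*} [AddCommGroup M] [Module R M]
    (P : Submodule R M) : Prop :=
  P ≠ ⊤ ∧ ∀ (A : TwoSidedIdeal R) (N : Submodule R M),
    (∀ a ∈ A, ∀ n ∈ N, a • n ∈ P) → N ≤ P ∨ ∀ a ∈ A, ∀ x : M, a • x ∈ P

/-- The prime radical `β(N)`: the intersection of all prime submodules containing `N`
(equal to `⊤ = M` if there are none). -/
def primeRadical {R : Type*} [Ring R] {M : Type*} [AddCommGroup M] [Module R M]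
    (N : Submodule R M) : Submodule R M :=
  sInf {P | IsPrimeSubmodule P ∧ N ≤ P}

/-- The completely prime radical `β_co(N)`: the intersection of all completely prime
submodules containing `N` (equal to `⊤ = M` if there are none). -/
def cpRadical {R : Type*} [Ring R] {M : Type*} [AddCommGroup M] [Module R M]
    (N : Submodule R M) : Submodule R M :=
  sInf {P | IsCompletelyPrimeSubmodule P ∧ N ≤ P}

/-- The envelope `E_M(N) = {r • m : r^k • m ∈ N for some positive integer k}`. -/
def envelope {R : Type*} [Ring R] {M : Type*} [AddCommGroup M] [Module R M]
    (N : Submodule R M) : Set M :=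
  {x | ∃ (r : R) (m : M) (k : ℕ), 0 < k ∧ r ^ k • m ∈ N ∧ x = r • m}

/-- A submodule `N` is completely semiprime if `a ^ 2 • m ∈ N` implies `a • m ∈ N`. -/
def IsCompletelySemiprimeSubmodule {R : Type*} [Ring R] {M : Type*} [AddCommGroup M]
    [Module R M] (N : Submodule R M) : Prop :=
  ∀ (a : R) (m : M), a ^ 2 • m ∈ N → a • m ∈ N

/-! Complete semiprimeness lets one halve exponents: from `r ^ (k + 1) • m ∈ N` it gives
`(r ^ k) ^ 2 • m = r ^ (k - 1) • r ^ (k + 1) • m ∈ N`, hence `r ^ k • m ∈ N`. Descending to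
`k = 1`, every generator `r • m` of the envelope already lies in `N`, so `E_M(N) = N`. -/

section Envelope

variable {R : Type*} [Ring R] {M : Type*} [AddCommGroup M] [Module R M] {N : Submodule R M}

theorem subset_envelope (N : Submodule R M) : (N : Set M) ⊆ envelope N :=
  fun x hx => ⟨1, x, 1, one_pos, by simpa using hx, (one_smul R x).symm⟩

namespace IsCompletelySemiprimeSubmodule

theorem pow_smul_mem_of_pow_succ_smul_mem (hN : IsCompletelySemiprimeSubmodule N) {r : R}
    {m : M} {k : ℕ} (hk : 0 < k) (h : r ^ (k + 1) • m ∈ N) : r ^ k • m ∈ N := by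
  apply hN
  rw [← pow_mul, show k * 2 = (k - 1) + (k + 1) by omega, pow_add, mul_smul]
  exact N.smul_mem _ h

theorem smul_mem_of_pow_smul_mem (hN : IsCompletelySemiprimeSubmodule N) {r : R} {m : M}
    {k : ℕ} (hk : 0 < k) (h : r ^ k • m ∈ N) : r • m ∈ N := by
  induction k, hk using Nat.le_induction with
  | base => simpa using h
  | succ k hk ih => exact ih (hN.pow_smul_mem_of_pow_succ_smul_mem hk h)

theorem envelope_eq (hN : IsCompletelySemiprimeSubmodule N) : envelope N = N := by
  refine Set.Subset.antisymm ?_ (subset_envelope N)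
  rintro _ ⟨r, m, k, hk, h, rfl⟩
  exact hN.smul_mem_of_pow_smul_mem hk h

end IsCompletelySemiprimeSubmodule

end Envelope

/-- for a completely semiprime submodule `N`, `E_M(N)` is a submodule of `M`. -/
theorem envelope_isSubmodule_of_completelySemiprime {R : Type*} [Ring R] {M : Type*}
    [AddCommGroup M] [Module R M] (N : Submodule R M)
    (hcsp : IsCompletelySemiprimeSubmodule N) :
    ∃ S : Submodule R M, (S : Set M) = envelope N :=
  ⟨N, hcsp.envelope_eq.symm⟩
end

section
/- If M is a 2-primal R-module such that β(M) = β(R)M, then the zero submodule of M satisfies the radical formula: ⟨E_M(0)⟩ = β(M). -/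
/-- A two-sided ideal `I` of `R` is prime if it is proper and `A B ⊆ I` implies
`A ⊆ I` or `B ⊆ I` for all two-sided ideals `A`, `B`. -/
def IsPrimeTwoSidedIdeal {R : Type*} [Ring R] (I : TwoSidedIdeal R) : Prop :=
  I ≠ ⊤ ∧ ∀ A B : TwoSidedIdeal R, (∀ a ∈ A, ∀ b ∈ B, a * b ∈ I) → A ≤ I ∨ B ≤ I

/-- A two-sided ideal `I` of `R` is completely prime if it is proper and
`a * b ∈ I` implies `a ∈ I` or `b ∈ I`. -/
def IsCompletelyPrimeTwoSidedIdeal {R : Type*} [Ring R] (I : TwoSidedIdeal R) : Prop :=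
  I ≠ ⊤ ∧ ∀ a b : R, a * b ∈ I → a ∈ I ∨ b ∈ I

/-- The prime radical `β(R)` of the ring `R`: the intersection of all prime
two-sided ideals of `R`. -/
def ringPrimeRadical (R : Type*) [Ring R] : Set R :=
  {a : R | ∀ I : TwoSidedIdeal R, IsPrimeTwoSidedIdeal I → a ∈ I}

/-- The completely prime radical `β_co(R)` of the ring `R`: the intersection of all
completely prime two-sided ideals of `R`. -/
def ringCpRadical (R : Type*) [Ring R] : Set R :=
  {a : R | ∀ I : TwoSidedIdeal R, IsCompletelyPrimeTwoSidedIdeal I → a ∈ I}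

/-! Every `a ∈ β(R)` is nilpotent: otherwise an ideal maximal among those missing the
powers of `a` is prime and misses `a`. Hence `β(R)M ⊆ E_M(0)`, so `β(M) = β(R)M ⊆ ⟨E_M(0)⟩`.
Conversely `r ^ k • m ∈ P` forces `r • m ∈ P` for a completely prime `P`, so
`⟨E_M(0)⟩ ⊆ β_co(M) = β(M)`. -/

namespace TwoSidedIdeal

variable {R : Type*} [Ring R]

theorem mem_sSup_of_directedOn {c : Set (TwoSidedIdeal R)} (hne : c.Nonempty)
    (hc : DirectedOn (· ≤ ·) c) {x : R} (hx : x ∈ sSup c) : ∃ I ∈ c, x ∈ I := by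
  obtain ⟨I₀, hI₀⟩ := hne
  let U : TwoSidedIdeal R := .mk' (⋃ I ∈ c, (I : Set R)) (Set.mem_biUnion hI₀ I₀.zero_mem)
    (fun {x y} hx hy => by
      obtain ⟨I, hI, hxI⟩ := Set.mem_iUnion₂.mp hx
      obtain ⟨J, hJ, hyJ⟩ := Set.mem_iUnion₂.mp hy
      obtain ⟨K, hK, hIK, hJK⟩ := hc I hI J hJ
      exact Set.mem_biUnion hK (K.add_mem (hIK hxI) (hJK hyJ)))
    (fun {x} hx => by
      obtain ⟨I, hI, hxI⟩ := Set.mem_iUnion₂.mp hx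
      exact Set.mem_biUnion hI (I.neg_mem hxI))
    (fun {x y} hy => by
      obtain ⟨I, hI, hyI⟩ := Set.mem_iUnion₂.mp hy
      exact Set.mem_biUnion hI (I.mul_mem_left x y hyI))
    (fun {x y} hx => by
      obtain ⟨I, hI, hxI⟩ := Set.mem_iUnion₂.mp hx
      exact Set.mem_biUnion hI (I.mul_mem_right x y hxI))
  have hU : sSup c ≤ U := sSup_le fun I hI y hy => (mem_mk' ..).mpr (Set.mem_biUnion hI hy)
  simpa only [U, mem_mk', Set.mem_iUnion₂, exists_prop, SetLike.mem_coe] using hU hx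

theorem exists_le_maximal_disjoint (S : Set R) {J : TwoSidedIdeal R}
    (hJ : Disjoint (J : Set R) S) :
    ∃ I, J ≤ I ∧ Maximal (fun I : TwoSidedIdeal R => Disjoint (I : Set R) S) I := by
  refine zorn_le_nonempty₀ _ (fun c hcS hc I hI => ⟨sSup c, ?_, fun _ => le_sSup⟩) J hJ
  refine Set.disjoint_left.mpr fun x hx hxS => ?_
  obtain ⟨K, hK, hxK⟩ := mem_sSup_of_directedOn ⟨I, hI⟩ hc.directedOn hx
  exact Set.disjoint_left.mp (hcS hK) hxK hxS

theorem isPrimeTwoSidedIdeal_of_maximal_disjoint {S : Submonoid R} {I : TwoSidedIdeal R}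
    (hI : Maximal (fun I : TwoSidedIdeal R => Disjoint (I : Set R) S) I) :
    IsPrimeTwoSidedIdeal I := by
  have hdisj : ∀ x ∈ S, x ∉ I := fun x hxS hxI => Set.disjoint_left.mp hI.prop hxI hxS
  have meets : ∀ J : TwoSidedIdeal R, ¬J ≤ I → ∃ s ∈ S, ∃ i ∈ I, ∃ j ∈ J, i + j = s := by
    intro J hJ
    by_contra! h
    refine hJ (le_sup_right.trans (hI.2 (Set.disjoint_right.mpr fun s hs hsIJ => ?_) le_sup_left))
    obtain ⟨i, hi, j, hj, rfl⟩ := mem_sup.mp hsIJ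
    exact h _ hs i hi j hj rfl
  refine ⟨fun htop => hdisj 1 S.one_mem (htop ▸ mem_top R), fun A B hAB => ?_⟩
  by_contra! hAB'
  obtain ⟨s, hs, i, hi, a, ha, rfl⟩ := meets A hAB'.1
  obtain ⟨t, ht, i', hi', b, hb, rfl⟩ := meets B hAB'.2
  refine hdisj _ (S.mul_mem hs ht) ?_
  rw [add_mul, mul_add a]
  exact I.add_mem (I.mul_mem_right _ _ hi)
    (I.add_mem (I.mul_mem_left _ _ hi') (hAB a ha b hb))

end TwoSidedIdeal

theorem isNilpotent_of_mem_ringPrimeRadical {R : Type*} [Ring R] {a : R}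
    (ha : a ∈ ringPrimeRadical R) : IsNilpotent a := by
  by_contra h
  have hbot : Disjoint ((⊥ : TwoSidedIdeal R) : Set R) (Submonoid.powers a) := by
    rw [TwoSidedIdeal.coe_bot, Set.disjoint_singleton_left]
    rintro ⟨n, hn⟩
    exact h ⟨n, hn⟩
  obtain ⟨I, -, hI⟩ := TwoSidedIdeal.exists_le_maximal_disjoint _ hbot
  exact Set.disjoint_left.mp hI.prop
    (ha I (TwoSidedIdeal.isPrimeTwoSidedIdeal_of_maximal_disjoint hI)) (Submonoid.mem_powers a)

section Module

variable {R : Type*} [Ring R] {M : Type*} [AddCommGroup M] [Module R M]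

theorem IsCompletelyPrimeSubmodule.smul_mem_of_pow_smul_mem {P : Submodule R M}
    (hP : IsCompletelyPrimeSubmodule P) {r : R} {m : M} {k : ℕ} (hk : 0 < k)
    (h : r ^ k • m ∈ P) : r • m ∈ P := by
  induction k with
  | zero => omega
  | succ n ih =>
    rcases n.eq_zero_or_pos with rfl | hn
    · simpa using h
    · rw [pow_succ', mul_smul] at h
      exact (hP.2 r _ h).elim (ih hn) (· m)

theorem span_envelope_le_cpRadical (N : Submodule R M) :
    Submodule.span R (envelope N) ≤ cpRadical N := by
  rw [Submodule.span_le]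
  rintro _ ⟨r, m, k, hk, hN, rfl⟩
  exact Submodule.mem_sInf.mpr fun P ⟨hP, hNP⟩ => hP.smul_mem_of_pow_smul_mem hk (hNP hN)

theorem smul_mem_envelope_bot_of_isNilpotent {a : R} (ha : IsNilpotent a) (m : M) :
    a • m ∈ envelope (⊥ : Submodule R M) := by
  obtain ⟨n, hn⟩ := ha
  exact ⟨a, m, n + 1, n.succ_pos, by simp [pow_succ, hn], rfl⟩

end Module

/-- if `M` is a 2-primal `R`-module with `β(M) = β(R)M`, then the zero
submodule of `M` satisfies the radical formula. -/
theorem radical_formula_zero_of_twoPrimal_of_primeRadical_eq_smul {R : Type*} [Ring R]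
    {M : Type*} [AddCommGroup M] [Module R M]
    (h2p : cpRadical (⊥ : Submodule R M) = primeRadical (⊥ : Submodule R M))
    (hβ : primeRadical (⊥ : Submodule R M) =
      Submodule.span R {x : M | ∃ a ∈ ringPrimeRadical R, ∃ m : M, x = a • m}) :
    Submodule.span R (envelope (⊥ : Submodule R M)) = primeRadical (⊥ : Submodule R M) := by
  refine le_antisymm (h2p ▸ span_envelope_le_cpRadical ⊥) ?_
  rw [hβ]
  refine Submodule.span_mono ?_
  rintro _ ⟨a, ha, m, rfl⟩
  exact smul_mem_envelope_bot_of_isNilpotent (isNilpotent_of_mem_ringPrimeRadical ha) m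
end
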